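/- Every string in the language L(G) of the unification grammar G lies in L₀, and the inclusion is proper: L(G) ⊊ L₀. -/

import Mathlib

/-- The five-letter terminal alphabet Σ = {♯, 0, 1, p, p̄}. -/
inductive Sig where
  | hash | zero | one | pos | neg
deriving DecidableEq, Repr

instance : Fintype Sig :=
  ⟨{.hash, .zero, .one, .pos, .neg}, fun x => by cases x <;> simp⟩

/-- The nonterminals of the regular grammar G'. -/
inductive NTm where
  | S | F | T | A | B
deriving DecidableEq, Repr

instance : Fintype NTm :=
  ⟨{.S, .F, .T, .A, .B}, fun x => by cases x <;> simp⟩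

instance : DecidableEq (ContextFreeRule Sig NTm) :=
  fun a b => decidable_of_iff (a.input = b.input ∧ a.output = b.output)
    (by cases a; cases b; simp)

/-- The productions of the right-linear regular grammar G'. -/
def rulesG' : List (ContextFreeRule Sig NTm) := [
  ⟨.S, [.terminal .hash, .nonterminal .F]⟩,
  ⟨.S, [.terminal .hash, .nonterminal .T]⟩,
  ⟨.S, []⟩,
  ⟨.F, [.terminal .zero, .nonterminal .F]⟩,
  ⟨.F, [.terminal .one, .nonterminal .F]⟩,
  ⟨.F, [.terminal .pos, .nonterminal .F]⟩,
  ⟨.F, [.terminal .neg, .nonterminal .F]⟩,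
  ⟨.F, [.terminal .pos, .nonterminal .T]⟩,
  ⟨.F, [.terminal .neg, .nonterminal .T]⟩,
  ⟨.T, [.terminal .zero, .nonterminal .T]⟩,
  ⟨.T, [.terminal .one, .nonterminal .T]⟩,
  ⟨.T, [.terminal .pos, .nonterminal .A]⟩,
  ⟨.T, [.terminal .neg, .nonterminal .A]⟩,
  ⟨.A, [.nonterminal .B]⟩,
  ⟨.A, [.nonterminal .S]⟩,
  ⟨.B, [.terminal .zero, .nonterminal .B]⟩,
  ⟨.B, [.terminal .one, .nonterminal .B]⟩,
  ⟨.B, [.terminal .pos, .nonterminal .A]⟩,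
  ⟨.B, [.terminal .neg, .nonterminal .A]⟩ ]

/-- The regular grammar G' (as a context-free grammar) with start symbol S. -/
def Gp : ContextFreeGrammar Sig := { NT := NTm, initial := NTm.S, rules := rulesG'.toFinset }

/-- A symbol of Σ is a bit, i.e. 0 or 1. -/
def IsBit (c : Sig) : Prop := c = .zero ∨ c = .one

/-- A segment: a (possibly empty) string over {0,1} followed by a single p or p̄. -/
def IsSegment (s : List Sig) : Prop :=
  ∃ u l, s = u ++ [l] ∧ (∀ c ∈ u, IsBit c) ∧ (l = Sig.pos ∨ l = Sig.neg)

/-- A block: ♯ followed by one or more segments. -/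
def IsBlock (b : List Sig) : Prop :=
  ∃ segs : List (List Sig), segs ≠ [] ∧ (∀ s ∈ segs, IsSegment s) ∧ b = Sig.hash :: segs.flatten

/-- The regular language L₀ = (♯((0∪1)*(p∪p̄))⁺)*. -/
def L0 : Set (List Sig) :=
  { w | ∃ bs : List (List Sig), (∀ b ∈ bs, IsBlock b) ∧ w = bs.flatten }

/-- The attributes {assign, new, v, 0, 1} of the feature theory of G. -/
inductive Attr where
  | assign | new | v | a0 | a1
deriving DecidableEq, Repr

/-- The atomic values {+, −}. -/
inductive Atom where
  | plus | minus
deriving DecidableEq, Repr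

/-- A term of a primitive constraint: a feature variable or an atomic value. -/
inductive FTerm where
  | fvar (n : ℕ)
  | atom (a : Atom)

/-- A primitive constraint `p x ≐ q t` (paths written innermost-first:
the head of the list is the attribute applied first). -/
structure FConstraint where
  lpath : List Attr
  lvar : ℕ
  rpath : List Attr
  rtm : FTerm

/-- `p x ≐ q y` for feature variables `x`, `y`. -/
def ceq (p : List Attr) (x : ℕ) (q : List Attr) (y : ℕ) : FConstraint := ⟨p, x, q, .fvar y⟩

/-- `p x ≐ a` for an atomic value `a`. -/
def cat (p : List Attr) (x : ℕ) (a : Atom) : FConstraint := ⟨p, x, [], .atom a⟩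

/-- A finite feature graph on node set `Fin k`: edges labelled by attributes,
at most one outgoing edge per attribute per node, nodes optionally carrying an
atomic value (in which case they have no outgoing edges), and acyclic. -/
structure FeatureGraph (k : ℕ) where
  edge : Fin k → Attr → Option (Fin k)
  val : Fin k → Option Atom
  val_no_edge : ∀ n : Fin k, (val n).isSome = true → ∀ f, edge n f = none
  acyclic : ∀ n : Fin k, ¬ Relation.TransGen (fun a b => ∃ f, edge a f = some b) n n

/-- Follow a path of attributes from a node, if all edges are defined. -/
def FeatureGraph.follow {k : ℕ} (g : FeatureGraph k) : Fin k → List Attr → Option (Fin k)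
  | n, [] => some n
  | n, f :: p => (g.edge n f).bind (fun m => g.follow m p)

/-- A constraint `p x ≐ q t` holds in `g` under the variable assignment `asgn`:
both paths are defined and lead to the same node, resp. to a node carrying
the required atomic value. -/
def FeatureGraph.SatC {k : ℕ} (g : FeatureGraph k) (asgn : ℕ → Fin k) (c : FConstraint) : Prop :=
  match c.rtm with
  | .fvar y => ∃ n, g.follow (asgn c.lvar) c.lpath = some n ∧ g.follow (asgn y) c.rpath = some n
  | .atom a => c.rpath = [] ∧
      ∃ n, g.follow (asgn c.lvar) c.lpath = some n ∧ g.val n = some a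

/-- A constraint set is satisfiable in some acyclic feature graph. -/
def ConsSat (cs : List FConstraint) : Prop :=
  ∃ (k : ℕ) (g : FeatureGraph k) (asgn : ℕ → Fin k), ∀ c ∈ cs, g.SatC asgn c

/-- `DerivC N w i cs`: there is a derivation tree of G' rooted at nonterminal `N`
with terminal yield `w`, whose nonterminal occurrences carry the distinct feature
variables `i, i+1, i+2, …` (root first), inducing the constraint list `cs`
obtained by instantiating the constraint annotating each applied rule of the
unification grammar G at the variables of the corresponding nodes. -/
inductive DerivC : NTm → List Sig → ℕ → List FConstraint → Prop where
  | sF {w i cs} : DerivC .F w (i+1) cs →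
      DerivC .S (.hash :: w) i (ceq [.assign] i [.assign] (i+1) :: cs)
  | sT {w i cs} : DerivC .T w (i+1) cs →
      DerivC .S (.hash :: w) i
        (ceq [.assign] i [.assign] (i+1) :: ceq [.assign] i [.new] (i+1) :: cs)
  | sEps {i} : DerivC .S [] i [cat [.assign, .v] i .plus]
  | f0 {w i cs} : DerivC .F w (i+1) cs →
      DerivC .F (.zero :: w) i (ceq [.assign] i [.assign] (i+1) :: cs)
  | f1 {w i cs} : DerivC .F w (i+1) cs →
      DerivC .F (.one :: w) i (ceq [.assign] i [.assign] (i+1) :: cs)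
  | fp {w i cs} : DerivC .F w (i+1) cs →
      DerivC .F (.pos :: w) i (ceq [.assign] i [.assign] (i+1) :: cs)
  | fn {w i cs} : DerivC .F w (i+1) cs →
      DerivC .F (.neg :: w) i (ceq [.assign] i [.assign] (i+1) :: cs)
  | fpT {w i cs} : DerivC .T w (i+1) cs →
      DerivC .F (.pos :: w) i
        (ceq [.assign] i [.assign] (i+1) :: ceq [.assign] i [.new] (i+1) :: cs)
  | fnT {w i cs} : DerivC .T w (i+1) cs →
      DerivC .F (.neg :: w) i
        (ceq [.assign] i [.assign] (i+1) :: ceq [.assign] i [.new] (i+1) :: cs)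
  | t0 {w i cs} : DerivC .T w (i+1) cs →
      DerivC .T (.zero :: w) i
        (ceq [.assign] i [.assign] (i+1) :: ceq [.a0, .new] i [.new] (i+1) :: cs)
  | t1 {w i cs} : DerivC .T w (i+1) cs →
      DerivC .T (.one :: w) i
        (ceq [.assign] i [.assign] (i+1) :: ceq [.a1, .new] i [.new] (i+1) :: cs)
  | tpA {w i cs} : DerivC .A w (i+1) cs →
      DerivC .T (.pos :: w) i
        (ceq [.assign] i [.assign] (i+1) :: cat [.new, .v] i .plus :: cs)
  | tnA {w i cs} : DerivC .A w (i+1) cs →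
      DerivC .T (.neg :: w) i
        (ceq [.assign] i [.assign] (i+1) :: cat [.new, .v] i .minus :: cs)
  | aB {w i cs} : DerivC .B w (i+1) cs →
      DerivC .A w i (ceq [.assign] i [.assign] (i+1) :: cs)
  | aS {w i cs} : DerivC .S w (i+1) cs →
      DerivC .A w i (ceq [.assign] i [.assign] (i+1) :: cs)
  | b0 {w i cs} : DerivC .B w (i+1) cs →
      DerivC .B (.zero :: w) i (ceq [.assign] i [.assign] (i+1) :: cs)
  | b1 {w i cs} : DerivC .B w (i+1) cs →
      DerivC .B (.one :: w) i (ceq [.assign] i [.assign] (i+1) :: cs)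
  | bpA {w i cs} : DerivC .A w (i+1) cs →
      DerivC .B (.pos :: w) i (ceq [.assign] i [.assign] (i+1) :: cs)
  | bnA {w i cs} : DerivC .A w (i+1) cs →
      DerivC .B (.neg :: w) i (ceq [.assign] i [.assign] (i+1) :: cs)

/-- The language L(G) of the unification grammar G: strings that admit a derivation
tree of G' from the start symbol S whose induced constraint set is satisfiable in
an acyclic feature graph. -/
def LG : Set (List Sig) := { w | ∃ cs, DerivC .S w 0 cs ∧ ConsSat cs }


/- ### Auxiliary lemmas for the inclusion LG ⊆ L0 -/

lemma L0_nil : ([] : List Sig) ∈ L0 := ⟨[], by simp, rfl⟩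

lemma L0_cons_block {b w : List Sig} (hb : IsBlock b) (hw : w ∈ L0) : b ++ w ∈ L0 := by
  obtain ⟨bs, h1, h2⟩ := hw
  refine ⟨b :: bs, ?_, by simp [h2]⟩
  intro x hx
  rcases List.mem_cons.1 hx with h | h
  · exact h ▸ hb
  · exact h1 x h

/-- Any nonempty hash-free string ending in p or p̄ is a concatenation of segments. -/
lemma seg_split {u : List Sig} (hu : ∀ c ∈ u, c ≠ .hash) {l : Sig}
    (hl : l = .pos ∨ l = .neg) :
    ∃ segs : List (List Sig), segs ≠ [] ∧ (∀ s ∈ segs, IsSegment s) ∧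
      u ++ [l] = segs.flatten := by
  induction u with
  | nil =>
    refine ⟨[[l]], by simp, ?_, by simp⟩
    intro s hs
    simp only [List.mem_singleton] at hs
    exact hs ▸ ⟨[], l, by simp, by simp, hl⟩
  | cons c u ih =>
    obtain ⟨segs, hne, hseg, heq⟩ := ih (fun x hx => hu x (by simp [hx]))
    cases segs with
    | nil => simp at hne
    | cons s ss =>
      have hc := hu c (by simp)
      have hcases : IsBit c ∨ c = .pos ∨ c = .neg := by
        cases c <;> simp_all [IsBit]
      rcases hcases with hb | hpn
      · obtain ⟨v, l', hs, hv, hl'⟩ := hseg s (by simp)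
        refine ⟨(c :: s) :: ss, by simp, ?_, ?_⟩
        · intro t ht
          rcases List.mem_cons.1 ht with h | h
          · subst h
            refine ⟨c :: v, l', by simp [hs], ?_, hl'⟩
            intro x hx
            rcases List.mem_cons.1 hx with h | h
            · exact h ▸ hb
            · exact hv x h
          · exact hseg t (by simp [h])
        · have : c :: (u ++ [l]) = c :: (s :: ss).flatten := by rw [heq]
          simpa using this
      · refine ⟨[c] :: s :: ss, by simp, ?_, ?_⟩
        · intro t ht
          rcases List.mem_cons.1 ht with h | h
          · exact h ▸ ⟨[], c, by simp, by simp, hpn⟩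
          · exact hseg t h
        · have : c :: (u ++ [l]) = c :: (s :: ss).flatten := by rw [heq]
          simpa using this

/-- `SegsThen w`: `w` is a concatenation of segments followed by a string in L0. -/
def SegsThen (w : List Sig) : Prop :=
  ∃ (segs : List (List Sig)) (rest : List Sig), (∀ s ∈ segs, IsSegment s) ∧ rest ∈ L0 ∧ w = segs.flatten ++ rest

lemma segsThen_of {u : List Sig} {l : Sig} {t : List Sig}
    (hu : ∀ c ∈ u, c ≠ .hash) (hl : l = .pos ∨ l = .neg) (ht : SegsThen t) :
    SegsThen (u ++ l :: t) := by
  obtain ⟨segs1, _, hseg1, heq⟩ := seg_split hu hl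
  obtain ⟨segs2, rest, hseg2, hrest, ht2⟩ := ht
  refine ⟨segs1 ++ segs2, rest, ?_, hrest, ?_⟩
  · intro s hs
    rcases List.mem_append.1 hs with h | h
    · exact hseg1 s h
    · exact hseg2 s h
  · have : u ++ l :: t = (u ++ [l]) ++ t := by simp
    rw [this, heq, ht2]
    simp

lemma hash_mem_L0 {u : List Sig} {l : Sig} {t : List Sig}
    (hu : ∀ c ∈ u, c ≠ .hash) (hl : l = .pos ∨ l = .neg) (ht : SegsThen t) :
    (Sig.hash :: (u ++ l :: t)) ∈ L0 := by
  obtain ⟨segs1, hne1, hseg1, heq⟩ := seg_split hu hl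
  obtain ⟨segs2, rest, hseg2, hrest, ht2⟩ := ht
  have hb : IsBlock (Sig.hash :: ((segs1 ++ segs2).flatten)) := by
    refine ⟨segs1 ++ segs2, by simp [hne1], ?_, rfl⟩
    intro s hs
    rcases List.mem_append.1 hs with h | h
    · exact hseg1 s h
    · exact hseg2 s h
  have h2 : Sig.hash :: (u ++ l :: t) =
      (Sig.hash :: ((segs1 ++ segs2).flatten)) ++ rest := by
    have : u ++ l :: t = (u ++ [l]) ++ t := by simp
    rw [this, heq, ht2]
    simp
  rw [h2]
  exact L0_cons_block hb hrest

def Yp : NTm → List Sig → Prop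
  | .S, w => w ∈ L0
  | .A, w => SegsThen w
  | .T, w => ∃ u l t, w = u ++ l :: t ∧ (∀ c ∈ u, IsBit c) ∧
      (l = .pos ∨ l = .neg) ∧ SegsThen t
  | .B, w => ∃ u l t, w = u ++ l :: t ∧ (∀ c ∈ u, IsBit c) ∧
      (l = .pos ∨ l = .neg) ∧ SegsThen t
  | .F, w => ∃ u l t, w = u ++ l :: t ∧ (∀ c ∈ u, c ≠ .hash) ∧
      (l = .pos ∨ l = .neg) ∧ SegsThen t

lemma bit_cons_front {c : Sig} (hc : IsBit c) {w : List Sig}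
    (h : ∃ u l t, w = u ++ l :: t ∧ (∀ x ∈ u, IsBit x) ∧ (l = .pos ∨ l = .neg) ∧ SegsThen t) :
    ∃ u l t, c :: w = u ++ l :: t ∧ (∀ x ∈ u, IsBit x) ∧ (l = .pos ∨ l = .neg) ∧ SegsThen t := by
  obtain ⟨u, l, t, rfl, hu, hl, ht⟩ := h
  refine ⟨c :: u, l, t, by simp, ?_, hl, ht⟩
  intro x hx
  rcases List.mem_cons.1 hx with h | h
  · exact h ▸ hc
  · exact hu x h

lemma nonhash_cons_front {c : Sig} (hc : c ≠ .hash) {w : List Sig}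
    (h : ∃ u l t, w = u ++ l :: t ∧ (∀ x ∈ u, x ≠ .hash) ∧ (l = .pos ∨ l = .neg) ∧ SegsThen t) :
    ∃ u l t, c :: w = u ++ l :: t ∧ (∀ x ∈ u, x ≠ .hash) ∧ (l = .pos ∨ l = .neg) ∧ SegsThen t := by
  obtain ⟨u, l, t, rfl, hu, hl, ht⟩ := h
  refine ⟨c :: u, l, t, by simp, ?_, hl, ht⟩
  intro x hx
  rcases List.mem_cons.1 hx with h | h
  · exact h ▸ hc
  · exact hu x h

lemma tprop_segsThen {w : List Sig}
    (h : ∃ u l t, w = u ++ l :: t ∧ (∀ x ∈ u, IsBit x) ∧ (l = .pos ∨ l = .neg) ∧ SegsThen t) :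
    SegsThen w := by
  obtain ⟨u, l, t, rfl, hu, hl, ht⟩ := h
  exact segsThen_of (fun x hx => by have := hu x hx; cases this <;> simp_all) hl ht

lemma segsThen_of_L0 {w : List Sig} (h : w ∈ L0) : SegsThen w :=
  ⟨[], w, by simp, h, by simp⟩

lemma derivC_yield {N : NTm} {w : List Sig} {i : ℕ} {cs : List FConstraint}
    (h : DerivC N w i cs) : Yp N w := by
  induction h with
  | sF h ih =>
    obtain ⟨u, l, t, rfl, hu, hl, ht⟩ := ih
    exact hash_mem_L0 hu hl ht
  | sT h ih =>
    obtain ⟨u, l, t, rfl, hu, hl, ht⟩ := ih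
    exact hash_mem_L0 (fun x hx => by have := hu x hx; cases this <;> simp_all) hl ht
  | sEps => exact L0_nil
  | f0 h ih => exact nonhash_cons_front (by simp) ih
  | f1 h ih => exact nonhash_cons_front (by simp) ih
  | fp h ih => exact nonhash_cons_front (by simp) ih
  | fn h ih => exact nonhash_cons_front (by simp) ih
  | fpT h ih => exact ⟨[], .pos, _, by simp, by simp, Or.inl rfl, tprop_segsThen ih⟩
  | fnT h ih => exact ⟨[], .neg, _, by simp, by simp, Or.inr rfl, tprop_segsThen ih⟩
  | t0 h ih => exact bit_cons_front (Or.inl rfl) ih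
  | t1 h ih => exact bit_cons_front (Or.inr rfl) ih
  | tpA h ih => exact ⟨[], .pos, _, by simp, by simp, Or.inl rfl, ih⟩
  | tnA h ih => exact ⟨[], .neg, _, by simp, by simp, Or.inr rfl, ih⟩
  | aB h ih => exact tprop_segsThen ih
  | aS h ih => exact segsThen_of_L0 ih
  | b0 h ih => exact bit_cons_front (Or.inl rfl) ih
  | b1 h ih => exact bit_cons_front (Or.inr rfl) ih
  | bpA h ih => exact ⟨[], .pos, _, by simp, by simp, Or.inl rfl, ih⟩
  | bnA h ih => exact ⟨[], .neg, _, by simp, by simp, Or.inr rfl, ih⟩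

/- ### The witness ♯p♯p̄ ∈ L0 \ L(G) -/

lemma seg_pos : IsSegment [Sig.pos] := ⟨[], .pos, by simp, by simp, Or.inl rfl⟩
lemma seg_neg : IsSegment [Sig.neg] := ⟨[], .neg, by simp, by simp, Or.inr rfl⟩

lemma block_pos : IsBlock [Sig.hash, .pos] := by
  refine ⟨[[Sig.pos]], by simp, ?_, by simp⟩
  intro s hs
  simp only [List.mem_singleton] at hs
  exact hs ▸ seg_pos

lemma block_neg : IsBlock [Sig.hash, .neg] := by
  refine ⟨[[Sig.neg]], by simp, ?_, by simp⟩
  intro s hs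
  simp only [List.mem_singleton] at hs
  exact hs ▸ seg_neg

lemma witness_mem_L0 : [Sig.hash, .pos, .hash, .neg] ∈ L0 := by
  refine ⟨[[.hash, .pos], [.hash, .neg]], ?_, by simp⟩
  intro b hb
  rcases List.mem_cons.1 hb with h | h
  · exact h ▸ block_pos
  · simp only [List.mem_singleton] at h
    exact h ▸ block_neg

lemma optb {α : Type*} (x : Option α) (n : α) :
    (x.bind fun a => some a) = some n ↔ x = some n := by cases x <;> simp

lemma witness_not_mem_LG : [Sig.hash, .pos, .hash, .neg] ∉ LG := by
  rintro ⟨cs, hd, hsat⟩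
  cases hd with
  | sF h1 =>
    cases h1 with
    | fp h2 => cases h2
    | fpT h2 => cases h2
  | sT h1 =>
    cases h1 with
    | tpA h2 =>
      cases h2 with
      | aB h3 => cases h3
      | aS h3 =>
        cases h3 with
        | sF h4 =>
          cases h4 with
          | fn h5 => cases h5
          | fnT h5 => cases h5
        | sT h4 =>
          cases h4 with
          | tnA h5 =>
            cases h5 with
            | aB h6 => cases h6
            | aS h6 =>
              cases h6
              obtain ⟨k, g, asgn, hs⟩ := hsat
              simp only [List.forall_mem_cons, List.forall_mem_nil, and_true,
                ceq, cat, FeatureGraph.SatC, FeatureGraph.follow, optb] at hs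
              obtain ⟨⟨n0, e00, e1a⟩, ⟨m0, e00', e1n⟩, ⟨n1, e1a', e2a⟩,
                ⟨-, v1, hv1, val1⟩, ⟨n2, e2a', e3a⟩, ⟨n3, e3a', e4a⟩,
                ⟨m3, e3a'', e4n⟩, ⟨n4, e4a', e5a⟩, ⟨-, v4, hv4, val4⟩, -⟩ := hs
              have h1 : m0 = n0 := Option.some_injective _ (e00'.symm.trans e00)
              have h2 : n0 = n1 := Option.some_injective _ (e1a.symm.trans e1a')
              have h3 : n1 = n2 := Option.some_injective _ (e2a.symm.trans e2a')
              have h4 : n2 = n3 := Option.some_injective _ (e3a.symm.trans e3a')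
              have h5 : m3 = n2 := Option.some_injective _ (e3a''.symm.trans e3a)
              have hmm : m0 = m3 := by rw [h1, h2, h3, ← h5]
              rw [e1n, hmm] at hv1
              rw [e4n] at hv4
              simp only [Option.bind_some, optb] at hv1 hv4
              have hv : v1 = v4 := Option.some_injective _ (hv1.symm.trans hv4)
              rw [hv, val4] at val1
              exact Atom.noConfusion (Option.some_injective _ val1)

/-- every string of L(G) lies in L₀ and the inclusion is proper. -/
theorem LG_proper_subset_L0 : LG ⊂ L0 := by
  constructor
  · intro w hw
    obtain ⟨cs, hd, _⟩ := hw
    exact derivC_yield hd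
  · intro hsub
    exact witness_not_mem_LG (hsub witness_mem_L0)
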